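/- arXiv:1403.4834 — 3 statements merged into one kernel-verified Lean document; each statement's English description precedes it below -/
import Mathlib

section
/- For every d ≥ 2, the sequence (c_{k-1}(d)/c_k(d))_{k ≥ 1} is decreasing in k. -/
/-!
Writing `c_k(d) = (dk)! / (k! ((d-1)k+1)!)`, the ratio of consecutive terms is
`c_{k+1}/c_k = (dk+1)/(k+1) · ∏_{i<d-1} (dk+i+2)/((d-1)k+i+2)`.
Each factor has the shape `(ak+b)/(a'k+b)` with `a' ≤ a`, hence increases with `k`, so
`c_{k+1}/c_k` increases and its reciprocal `c_k/c_{k+1}` decreases.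
-/

open Finset Nat

noncomputable def c (d k : ℕ) : ℝ := (Nat.choose (d * k) k : ℝ) / ((d - 1) * k + 1)

lemma c_pos {d : ℕ} (hd : 1 ≤ d) (k : ℕ) : 0 < c d k := by
  have hchoose : 0 < (d * k).choose k := Nat.choose_pos (Nat.le_mul_of_pos_left k hd)
  have hd' : (0 : ℝ) ≤ d - 1 := by rw [sub_nonneg]; exact_mod_cast hd
  unfold c
  positivity

lemma c_eq_factorial {d : ℕ} (hd : 1 ≤ d) (k : ℕ) :
    c d k = (d * k)! / (k ! * ((d - 1) * k + 1)! : ℝ) := by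
  rw [c, Nat.cast_choose ℝ (Nat.le_mul_of_pos_left k hd), ← Nat.sub_one_mul,
    Nat.factorial_succ]
  push_cast [Nat.cast_sub hd]
  field_simp

lemma c_succ_div_c {d : ℕ} (hd : 1 ≤ d) (k : ℕ) :
    c d (k + 1) / c d k = (d * k + 1 : ℝ) / (k + 1) *
      ∏ i ∈ range (d - 1), ((d * k + i + 2 : ℝ) / ((d - 1 : ℕ) * k + i + 2)) := by
  obtain ⟨n, rfl⟩ : ∃ n, d = n + 1 := ⟨d - 1, by omega⟩
  have hnum :
      ((n + 1) * (k + 1))! = ((n + 1) * k)! * ((n + 1) * k + 1).ascFactorial (n + 1) := by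
    rw [Nat.factorial_mul_ascFactorial]; ring_nf
  have hden : (n * (k + 1) + 1)! = (n * k + 1)! * (n * k + 2).ascFactorial n := by
    rw [Nat.factorial_mul_ascFactorial]; ring_nf
  rw [c_eq_factorial hd, c_eq_factorial hd, Nat.add_sub_cancel, hnum, hden, Nat.factorial_succ,
    Nat.ascFactorial_eq_prod_range, Nat.ascFactorial_eq_prod_range, prod_range_succ',
    prod_div_distrib]
  push_cast
  field_simp
  ring_nf

lemma affine_div_affine_le_of_le {a b a' b' x y : ℝ} (ha' : 0 ≤ a') (hb' : 0 < b')
    (hab : a' * b ≤ a * b') (hx : 0 ≤ x) (hxy : x ≤ y) :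
    (a * x + b) / (a' * x + b') ≤ (a * y + b) / (a' * y + b') := by
  rw [div_le_div_iff₀ (by positivity) (by nlinarith)]
  nlinarith [mul_nonneg (sub_nonneg.2 hab) (sub_nonneg.2 hxy)]

lemma monotone_c_succ_div_c {d : ℕ} (hd : 1 ≤ d) : Monotone fun k ↦ c d (k + 1) / c d k := by
  refine monotone_nat_of_le_succ fun k ↦ ?_
  simp only [c_succ_div_c hd]
  have hk : (k : ℝ) ≤ k + 1 := by linarith
  push_cast
  refine mul_le_mul ?_ (prod_le_prod (fun i _ ↦ by positivity) fun i _ ↦ ?_) (by positivity)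
    (by positivity)
  · simpa using affine_div_affine_le_of_le (a := d) (b := 1) (a' := 1) (b' := 1) zero_le_one
      one_pos (by simpa using hd) k.cast_nonneg hk
  · simpa only [add_assoc] using affine_div_affine_le_of_le (a := d) (b := i + 2)
      (a' := (d - 1 : ℕ)) (b' := i + 2) (Nat.cast_nonneg _) (by positivity) (by gcongr; simp)
      k.cast_nonneg hk

/-- For every `d ≥ 2`, the sequence `(c_{k-1}(d)/c_k(d))_{k ≥ 1}` is decreasing in `k`. -/
theorem ratio_decreasing (d : ℕ) (hd : 2 ≤ d) :
    ∀ j k : ℕ, 1 ≤ j → j ≤ k → c d (k - 1) / c d k ≤ c d (j - 1) / c d j := by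
  intro j k hj hjk
  have hd1 : 1 ≤ d := by omega
  obtain ⟨j, rfl⟩ : ∃ i, j = i + 1 := ⟨j - 1, by omega⟩
  obtain ⟨k, rfl⟩ : ∃ i, k = i + 1 := ⟨k - 1, by omega⟩
  simp only [Nat.add_sub_cancel]
  rw [← inv_div, ← inv_div (c d (j + 1))]
  exact inv_anti₀ (div_pos (c_pos hd1 _) (c_pos hd1 _)) (monotone_c_succ_div_c hd1 (by omega))
end

section
/- For every d ≥ 2, p ∈ (0,1), and k ≥ 1, we have (c_k(d)/c_{k-1}(d)) · p · (1-p)^{d-1} ≤ 1; equivalently the probability that a Galton-Watson tree with Bin(d,p) offspring has exactly k vertices is decreasing in k. -/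
open Nat

/-- The tangent-line inequality for `x ↦ x ^ (n + 1)` at `b`, a homogeneous form of Bernoulli's
inequality. -/
theorem pow_mul_sub_le_pow_succ {a b : ℝ} (hb : 0 ≤ b) (hab : -b ≤ a) (n : ℕ) :
    b ^ n * ((n + 1) * a - n * b) ≤ a ^ (n + 1) := by
  rcases hb.eq_or_lt with rfl | hb
  · have ha : 0 ≤ a := by simpa using hab
    rcases n with _ | n
    · simp
    · simpa using pow_nonneg ha (n + 2)
  · have hx : -2 ≤ a / b - 1 := by
      rw [le_sub_iff_add_le, le_div_iff₀ hb]
      linarith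
    have bernoulli := one_add_mul_le_pow hx (n + 1)
    rw [add_sub_cancel, div_pow, le_div_iff₀ (pow_pos hb _)] at bernoulli
    calc b ^ n * ((n + 1) * a - n * b)
        = (1 + ((n + 1 : ℕ) : ℝ) * (a / b - 1)) * b ^ (n + 1) := by
          push_cast
          field_simp
          ring
      _ ≤ a ^ (n + 1) := bernoulli

/-- `p (1 - p) ^ n` is maximal at `p = 1 / (n + 1)`. -/
theorem pow_succ_mul_mul_one_sub_pow_le (n : ℕ) {p : ℝ} (hp : p ≤ 1) :
    ((n : ℝ) + 1) ^ (n + 1) * p * (1 - p) ^ n ≤ (n : ℝ) ^ n := by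
  rcases n.eq_zero_or_pos with rfl | hn
  · simpa using hp
  have hnR : (0 : ℝ) < n := by exact_mod_cast hn
  have tangent := pow_mul_sub_le_pow_succ (a := n) (b := (n + 1) * (1 - p))
    (by nlinarith) (by nlinarith) n
  refine le_of_mul_le_mul_left ?_ hnR
  calc (n : ℝ) * (((n : ℝ) + 1) ^ (n + 1) * p * (1 - p) ^ n)
      = ((n + 1) * (1 - p)) ^ n * ((n + 1) * n - n * ((n + 1) * (1 - p))) := by
        rw [mul_pow, pow_succ]
        ring
    _ ≤ (n : ℝ) ^ (n + 1) := tangent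
    _ = n * (n : ℝ) ^ n := pow_succ' _ _

theorem pow_mul_factorial_add_le {e a b : ℕ} (h : e * (a + 1) ≤ (e + 1) * (b + 1)) (k : ℕ) :
    e ^ k * (a + k)! * b ! ≤ (e + 1) ^ k * a ! * (b + k)! := by
  induction k with
  | zero => simp
  | succ k ih =>
    have step : e * (a + k + 1) ≤ (e + 1) * (b + k + 1) := by nlinarith
    calc e ^ (k + 1) * (a + (k + 1))! * b !
        = e * (a + k + 1) * (e ^ k * (a + k)! * b !) := by
          rw [← add_assoc, factorial_succ, pow_succ]
          ring
      _ ≤ (e + 1) * (b + k + 1) * ((e + 1) ^ k * a ! * (b + k)!) :=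
          Nat.mul_le_mul step ih
      _ = (e + 1) ^ (k + 1) * a ! * (b + (k + 1))! := by
          rw [← add_assoc, factorial_succ, pow_succ]
          ring

theorem c_succ_eq_factorial_div (e k : ℕ) :
    c (e + 1) k = (((e + 1) * k)! : ℝ) / (k ! * (e * k + 1)!) := by
  have hk : k ≤ (e + 1) * k := Nat.le_mul_of_pos_left k e.succ_pos
  have hsub : (e + 1) * k - k = e * k := by rw [add_mul, one_mul, Nat.add_sub_cancel]
  rw [c, cast_choose ℝ hk, hsub, factorial_succ]
  push_cast
  rw [add_sub_cancel_right, div_div, mul_assoc, mul_comm _ ((e : ℝ) * k + 1)]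

theorem c_succ_pos (e k : ℕ) : 0 < c (e + 1) k := by
  rw [c_succ_eq_factorial_div]
  positivity

theorem c_succ_succ_mul_pow_le (e m : ℕ) :
    c (e + 1) (m + 1) * (e : ℝ) ^ e ≤ c (e + 1) m * ((e : ℝ) + 1) ^ (e + 1) := by
  have hfac : ((e + 1) * (m + 1))! * m ! * (e * m + 1)! * e ^ e
      ≤ ((e + 1) * m)! * (m + 1)! * (e * (m + 1) + 1)! * (e + 1) ^ (e + 1) := by
    have h := pow_mul_factorial_add_le (e := e) (a := (e + 1) * m) (b := e * m + 1)
      (by nlinarith) e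
    calc ((e + 1) * (m + 1))! * m ! * (e * m + 1)! * e ^ e
        = (e + 1) * (m + 1) * m ! * (e ^ e * ((e + 1) * m + e)! * (e * m + 1)!) := by
          rw [show (e + 1) * (m + 1) = (e + 1) * m + e + 1 by ring, factorial_succ]
          ring
      _ ≤ (e + 1) * (m + 1) * m ! * ((e + 1) ^ e * ((e + 1) * m)! * (e * m + 1 + e)!) :=
          Nat.mul_le_mul_left _ h
      _ = ((e + 1) * m)! * (m + 1)! * (e * (m + 1) + 1)! * (e + 1) ^ (e + 1) := by
          rw [show e * (m + 1) + 1 = e * m + 1 + e by ring, factorial_succ m, pow_succ]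
          ring
  rw [c_succ_eq_factorial_div, c_succ_eq_factorial_div, div_mul_eq_mul_div, div_mul_eq_mul_div,
    div_le_div_iff₀ (by positivity) (by positivity)]
  exact_mod_cast (by linarith [hfac] : _)

theorem c_succ_succ_mul_le (e m : ℕ) {p : ℝ} (hp : p ≤ 1) :
    c (e + 1) (m + 1) * (p * (1 - p) ^ e) ≤ c (e + 1) m := by
  have hpow : (0 : ℝ) < ((e : ℝ) + 1) ^ (e + 1) := by positivity
  refine le_of_mul_le_mul_right ?_ hpow
  calc c (e + 1) (m + 1) * (p * (1 - p) ^ e) * ((e : ℝ) + 1) ^ (e + 1)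
      = c (e + 1) (m + 1) * (((e : ℝ) + 1) ^ (e + 1) * p * (1 - p) ^ e) := by ring
    _ ≤ c (e + 1) (m + 1) * (e : ℝ) ^ e :=
        mul_le_mul_of_nonneg_left (pow_succ_mul_mul_one_sub_pow_le e hp) (c_succ_pos e _).le
    _ ≤ c (e + 1) m * ((e : ℝ) + 1) ^ (e + 1) := c_succ_succ_mul_pow_le e m

/-- `(c_k/c_{k-1})·p·(1-p)^{d-1} ≤ 1`; equivalently `η_k(p) = c_k p^k (1-p)^{(d-1)k+1}`,
the probability that a Bin(d,p) Galton-Watson tree has exactly `k` vertices,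
is decreasing in `k`. -/
theorem gw_size_prob_decreasing (d k : ℕ) (p : ℝ) (hd : 2 ≤ d) (hk : 1 ≤ k)
    (hp0 : 0 < p) (hp1 : p < 1) :
    (c d k / c d (k - 1)) * p * (1 - p) ^ (d - 1) ≤ 1 ∧
      c d k * p ^ k * (1 - p) ^ ((d - 1) * k + 1)
        ≤ c d (k - 1) * p ^ (k - 1) * (1 - p) ^ ((d - 1) * (k - 1) + 1) := by
  obtain ⟨e, rfl⟩ : ∃ e, d = e + 1 := ⟨d - 1, by omega⟩
  obtain ⟨m, rfl⟩ : ∃ m, k = m + 1 := ⟨k - 1, by omega⟩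
  simp only [Nat.add_sub_cancel]
  have key := c_succ_succ_mul_le e m hp1.le
  constructor
  · rw [div_mul_eq_mul_div, div_mul_eq_mul_div, div_le_one (c_succ_pos e m), mul_assoc]
    exact key
  · have hrest : 0 ≤ p ^ m * (1 - p) ^ (e * m + 1) :=
      mul_nonneg (pow_nonneg hp0.le _) (pow_nonneg (sub_nonneg.2 hp1.le) _)
    calc c (e + 1) (m + 1) * p ^ (m + 1) * (1 - p) ^ (e * (m + 1) + 1)
        = c (e + 1) (m + 1) * (p * (1 - p) ^ e) * (p ^ m * (1 - p) ^ (e * m + 1)) := by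
          rw [show e * (m + 1) + 1 = e * m + 1 + e by ring, pow_add, pow_succ]
          ring
      _ ≤ c (e + 1) m * (p ^ m * (1 - p) ^ (e * m + 1)) := mul_le_mul_of_nonneg_right key hrest
      _ = c (e + 1) m * p ^ m * (1 - p) ^ (e * m + 1) := by ring
end

section
/- For d = 2 and 1/2 ≤ p_1 < p_2 ≤ 1, there exists a coupling of the random variables L*(p_1) and L*(p_2) such that L*(p_1) ≤ L*(p_2) almost surely; i.e., L*(p_2) stochastically dominates L*(p_1). -/
noncomputable def c2 (k : ℕ) : ℝ := (Nat.choose (2 * k) k : ℝ) / (k + 1)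

noncomputable def eta2 (p : ℝ) (k : ℕ) : ℝ := c2 k * p ^ k * (1 - p) ^ (k + 1)

noncomputable def etaInf2 (p : ℝ) : ℝ := (2 * p - 1) / p

/-!
With `x = p (1 - p)` the finite masses of `L*(p)` are `2 cₖ x^(k+1)`. By the Catalan recursion
`T = ∑ cₖ x^(k+1)` is a root of `T = x + T²`, and the partial sums stay below the smaller root
`1 - p`, so the finite masses add up to `2 (1 - p)` and the mass at `∞` is `2p - 1`. Since
`p (1 - p)` decreases on `[1/2, 1]`, every finite mass of `L*(p₂)` is at most that of `L*(p₁)`: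
the coupling puts the mass of `L*(p₂) = k` at `(k, k)`, the excess of `L*(p₁) = k` at `(k, ∞)`,
and the mass of `L*(p₁) = ∞` at `(∞, ∞)`.
-/

open MeasureTheory Finset
open scoped ENNReal

lemma sum_range_sum_mul_le_sq {g : ℕ → ℝ} (hg : ∀ k, 0 ≤ g k) (N : ℕ) :
    ∑ n ∈ range N, ∑ i ∈ range (n + 1), g i * g (n - i) ≤ (∑ k ∈ range N, g k) ^ 2 := by
  rw [sum_range_diag_flip N fun i j => g i * g j, sq, sum_mul_sum]
  gcongr with i hi j
  · exact fun _ _ _ => mul_nonneg (hg _) (hg _)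
  · exact Nat.sub_le N i

section CatalanRecursion

variable {g : ℕ → ℝ} {x r : ℝ} (hg : ∀ k, 0 ≤ g k) (hg0 : g 0 = x)
  (hg_succ : ∀ n, g (n + 1) = ∑ i ∈ range (n + 1), g i * g (n - i))
  (hrx : r = x + r ^ 2)
include hg hg0 hg_succ hrx

lemma sum_range_le_of_catalan_recursion (N : ℕ) : ∑ k ∈ range N, g k ≤ r := by
  induction N with
  | zero => rw [sum_range_zero, hrx, ← hg0]; exact add_nonneg (hg 0) (sq_nonneg r)
  | succ N ih =>
    have hS : 0 ≤ ∑ k ∈ range N, g k := sum_nonneg fun k _ => hg k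
    calc ∑ k ∈ range (N + 1), g k
        = x + ∑ n ∈ range N, ∑ i ∈ range (n + 1), g i * g (n - i) := by
          rw [sum_range_succ', hg0, add_comm]; simp only [hg_succ]
      _ ≤ x + (∑ k ∈ range N, g k) ^ 2 := by gcongr; exact sum_range_sum_mul_le_sq hg N
      _ ≤ x + r ^ 2 := by gcongr
      _ = r := hrx.symm

lemma hasSum_of_catalan_recursion (hr : r ≤ 1 / 2) : HasSum g r := by
  have hpart := sum_range_le_of_catalan_recursion hg hg0 hg_succ hrx
  have hsum : Summable g := summable_of_sum_range_le hg hpart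
  have hnorm : Summable fun k => ‖g k‖ := by simpa [Real.norm_of_nonneg (hg _)] using hsum
  have hTT : (∑' k, g k) * (∑' k, g k) = ∑' k, g k - x := by
    rw [tsum_mul_tsum_eq_tsum_sum_range_of_summable_norm hnorm hnorm, hsum.tsum_eq_zero_add, hg0]
    simp only [← hg_succ]
    ring
  have hTr : ∑' k, g k ≤ r := Real.tsum_le_of_sum_range_le hg hpart
  set T := ∑' k, g k
  -- `T` and `r` are both roots of `t = x + t²`; the other root `1 - r` is at least `1/2 ≥ r ≥ T`.
  have hroots : (T - r) * (T + r - 1) = 0 := by linear_combination hTT + hrx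
  have hT : T = r := by rcases mul_eq_zero.1 hroots with h | h <;> linarith
  exact hT ▸ hsum.hasSum

end CatalanRecursion

lemma hasSum_catalan_mul_pow_succ {p : ℝ} (hp : 1 / 2 ≤ p) (hp1 : p ≤ 1) :
    HasSum (fun k => (catalan k : ℝ) * (p * (1 - p)) ^ (k + 1)) (1 - p) := by
  have hx : 0 ≤ p * (1 - p) := mul_nonneg (by linarith) (by linarith)
  refine hasSum_of_catalan_recursion (x := p * (1 - p)) (fun k => by positivity) (by simp)
    (fun n => ?_) (by ring) (by linarith)
  rw [catalan_succ', Nat.cast_sum, sum_mul, Nat.sum_antidiagonal_eq_sum_range_succ_mk]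
  refine sum_congr rfl fun i hi => ?_
  have hin : i ≤ n := Nat.lt_succ_iff.1 (mem_range.1 hi)
  rw [Nat.cast_mul, show n + 1 + 1 = (i + 1) + (n - i + 1) by omega, pow_add]
  ring

lemma c2_eq_catalan (k : ℕ) : c2 k = catalan k := by
  rw [c2, div_eq_iff (by positivity), ← Nat.centralBinom_eq_two_mul_choose,
    ← succ_mul_catalan_eq_centralBinom]
  push_cast
  ring

lemma two_mul_mul_eta2_eq (p : ℝ) (k : ℕ) :
    2 * p * eta2 p k = 2 * ((catalan k : ℝ) * (p * (1 - p)) ^ (k + 1)) := by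
  rw [eta2, c2_eq_catalan, mul_pow]
  ring

lemma hasSum_two_mul_mul_eta2 {p : ℝ} (hp : 1 / 2 ≤ p) (hp1 : p ≤ 1) :
    HasSum (fun k => 2 * p * eta2 p k) (2 * (1 - p)) := by
  simp only [two_mul_mul_eta2_eq]
  exact (hasSum_catalan_mul_pow_succ hp hp1).mul_left 2

lemma two_mul_mul_eta2_nonneg {p : ℝ} (hp : 0 ≤ p) (hp1 : p ≤ 1) (k : ℕ) :
    0 ≤ 2 * p * eta2 p k := by
  have : 0 ≤ p * (1 - p) := mul_nonneg hp (by linarith)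
  rw [two_mul_mul_eta2_eq]
  positivity

lemma two_mul_mul_eta2_le_of_le {p₁ p₂ : ℝ} (h1 : 1 / 2 ≤ p₁) (h12 : p₁ ≤ p₂) (h2 : p₂ ≤ 1)
    (k : ℕ) : 2 * p₂ * eta2 p₂ k ≤ 2 * p₁ * eta2 p₁ k := by
  have : 0 ≤ p₂ * (1 - p₂) := mul_nonneg (by linarith) (by linarith)
  have : p₂ * (1 - p₂) ≤ p₁ * (1 - p₁) := by nlinarith
  rw [two_mul_mul_eta2_eq, two_mul_mul_eta2_eq]
  gcongr

lemma tsum_ofReal_two_mul_mul_eta2 {p : ℝ} (hp : 1 / 2 ≤ p) (hp1 : p ≤ 1) :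
    ∑' k, ENNReal.ofReal (2 * p * eta2 p k) = ENNReal.ofReal (2 * (1 - p)) := by
  have hsum := hasSum_two_mul_mul_eta2 hp hp1
  rw [← ENNReal.ofReal_tsum_of_nonneg (two_mul_mul_eta2_nonneg (by linarith) hp1) hsum.summable,
    hsum.tsum_eq]

lemma tsum_sub_two_mul_mul_eta2 {p₁ p₂ : ℝ} (h1 : 1 / 2 ≤ p₁) (h12 : p₁ ≤ p₂) (h2 : p₂ ≤ 1) :
    ∑' k, (ENNReal.ofReal (2 * p₁ * eta2 p₁ k) - ENNReal.ofReal (2 * p₂ * eta2 p₂ k)) =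
      ENNReal.ofReal (2 * p₂ - 2 * p₁) := by
  have hsum₂ := tsum_ofReal_two_mul_mul_eta2 (h1.trans h12) h2
  rw [ENNReal.tsum_sub (hsum₂ ▸ ENNReal.ofReal_ne_top)
      fun k => ENNReal.ofReal_le_ofReal (two_mul_mul_eta2_le_of_le h1 h12 h2 k),
    tsum_ofReal_two_mul_mul_eta2 h1 (h12.trans h2), hsum₂, ← ENNReal.ofReal_sub _ (by linarith)]
  congr 1
  ring

lemma mul_etaInf2 {p : ℝ} (hp : p ≠ 0) : p * etaInf2 p = 2 * p - 1 := by
  rw [etaInf2, mul_div_cancel₀ _ hp]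

namespace ENat

noncomputable def measureOfMasses (a : ℕ → ℝ≥0∞) (z : ℝ≥0∞) : Measure ℕ∞ :=
  Measure.sum (fun k => a k • Measure.dirac (k : ℕ∞)) + z • Measure.dirac ⊤

variable (a : ℕ → ℝ≥0∞) (z : ℝ≥0∞)

open scoped Classical in
lemma measureOfMasses_apply (s : Set ℕ∞) :
    measureOfMasses a z s =
      (∑' k : ℕ, if (k : ℕ∞) ∈ s then a k else 0) + if ⊤ ∈ s then z else 0 := by
  simp [measureOfMasses, Set.indicator_apply]

lemma measureOfMasses_apply_coe (j : ℕ) : measureOfMasses a z {(j : ℕ∞)} = a j := by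
  simp [measureOfMasses_apply]

lemma measureOfMasses_apply_top : measureOfMasses a z {⊤} = z := by
  simp [measureOfMasses_apply]

lemma measureOfMasses_univ : measureOfMasses a z Set.univ = ∑' k, a k + z := by
  simp [measureOfMasses_apply]

end ENat

noncomputable def monotoneCoupling (a b : ℕ → ℝ≥0∞) (z : ℝ≥0∞) : Measure (ℕ∞ × ℕ∞) :=
  Measure.sum (fun k => b k • Measure.dirac ((k : ℕ∞), (k : ℕ∞)) +
    (a k - b k) • Measure.dirac ((k : ℕ∞), ⊤)) + z • Measure.dirac (⊤, ⊤)

section MonotoneCoupling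

variable {a b : ℕ → ℝ≥0∞} (z : ℝ≥0∞)

open scoped Classical in
lemma monotoneCoupling_apply (s : Set (ℕ∞ × ℕ∞)) :
    monotoneCoupling a b z s =
      (∑' k : ℕ, ((if ((k : ℕ∞), (k : ℕ∞)) ∈ s then b k else 0) +
        if ((k : ℕ∞), ⊤) ∈ s then a k - b k else 0)) + if (⊤, ⊤) ∈ s then z else 0 := by
  simp [monotoneCoupling, Measure.sum_apply_of_countable, Set.indicator_apply]

lemma map_fst_monotoneCoupling (hba : b ≤ a) :
    (monotoneCoupling a b z).map Prod.fst = ENat.measureOfMasses a z := by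
  refine Measure.ext_iff_singleton.2 fun x => ?_
  rw [Measure.map_apply measurable_fst (measurableSet_singleton x), monotoneCoupling_apply]
  induction x using ENat.recTopCoe with
  | top => simp [ENat.measureOfMasses_apply_top]
  | coe j => simp [ENat.measureOfMasses_apply_coe, ite_add_ite, add_tsub_cancel_of_le (hba j)]

lemma map_snd_monotoneCoupling :
    (monotoneCoupling a b z).map Prod.snd = ENat.measureOfMasses b (z + ∑' k, (a k - b k)) := by
  refine Measure.ext_iff_singleton.2 fun x => ?_
  rw [Measure.map_apply measurable_snd (measurableSet_singleton x), monotoneCoupling_apply]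
  induction x using ENat.recTopCoe with
  | top => simp [ENat.measureOfMasses_apply_top, add_comm]
  | coe j => simp [ENat.measureOfMasses_apply_coe]

lemma ae_fst_le_snd_monotoneCoupling : ∀ᵐ x ∂(monotoneCoupling a b z), x.1 ≤ x.2 := by
  rw [ae_iff, monotoneCoupling_apply]
  simp

end MonotoneCoupling

noncomputable def lawLstar (p : ℝ) : Measure ℕ∞ :=
  ENat.measureOfMasses (fun k => ENNReal.ofReal (2 * p * eta2 p k))
    (ENNReal.ofReal (p * etaInf2 p))

lemma isProbabilityMeasure_lawLstar {p : ℝ} (hp : 1 / 2 ≤ p) (hp1 : p ≤ 1) :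
    IsProbabilityMeasure (lawLstar p) := by
  constructor
  rw [lawLstar, ENat.measureOfMasses_univ, tsum_ofReal_two_mul_mul_eta2 hp hp1,
    mul_etaInf2 (by linarith), ← ENNReal.ofReal_add (by linarith) (by linarith)]
  ring_nf
  exact ENNReal.ofReal_one

/-- For `d = 2` and `1/2 ≤ p₁ < p₂ ≤ 1` there is a coupling (a probability measure on
`ℕ∞ × ℕ∞` with the correct marginals) under which `L*(p₁) ≤ L*(p₂)` a.s. -/
theorem coupling_Lstar (p₁ p₂ : ℝ) (h1 : 1 / 2 ≤ p₁) (h12 : p₁ < p₂) (h2 : p₂ ≤ 1) :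
    ∃ μ : MeasureTheory.Measure (ℕ∞ × ℕ∞), MeasureTheory.IsProbabilityMeasure μ ∧
      (∀ k : ℕ, μ.map Prod.fst {(k : ℕ∞)} = ENNReal.ofReal (2 * p₁ * eta2 p₁ k)) ∧
      μ.map Prod.fst {(⊤ : ℕ∞)} = ENNReal.ofReal (p₁ * etaInf2 p₁) ∧
      (∀ k : ℕ, μ.map Prod.snd {(k : ℕ∞)} = ENNReal.ofReal (2 * p₂ * eta2 p₂ k)) ∧
      μ.map Prod.snd {(⊤ : ℕ∞)} = ENNReal.ofReal (p₂ * etaInf2 p₂) ∧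
      μ {x : ℕ∞ × ℕ∞ | x.1 ≤ x.2} = 1 := by
  set μ := monotoneCoupling (fun k => ENNReal.ofReal (2 * p₁ * eta2 p₁ k))
    (fun k => ENNReal.ofReal (2 * p₂ * eta2 p₂ k)) (ENNReal.ofReal (2 * p₁ - 1))
  have hfst : μ.map Prod.fst = lawLstar p₁ := by
    rw [map_fst_monotoneCoupling _
      fun k => ENNReal.ofReal_le_ofReal (two_mul_mul_eta2_le_of_le h1 h12.le h2 k),
      lawLstar, mul_etaInf2 (by linarith)]
  have hsnd : μ.map Prod.snd = lawLstar p₂ := by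
    rw [map_snd_monotoneCoupling, tsum_sub_two_mul_mul_eta2 h1 h12.le h2,
      ← ENNReal.ofReal_add (by linarith) (by linarith), lawLstar, mul_etaInf2 (by linarith)]
    congr 2
    ring
  have hprob : IsProbabilityMeasure μ :=
    have : IsProbabilityMeasure (μ.map Prod.fst) :=
      hfst ▸ isProbabilityMeasure_lawLstar h1 (h12.le.trans h2)
    Measure.isProbabilityMeasure_of_map Prod.fst
  refine ⟨μ, hprob, fun k => ?_, ?_, fun k => ?_, ?_, ?_⟩
  · rw [hfst, lawLstar, ENat.measureOfMasses_apply_coe]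
  · rw [hfst, lawLstar, ENat.measureOfMasses_apply_top]
  · rw [hsnd, lawLstar, ENat.measureOfMasses_apply_coe]
  · rw [hsnd, lawLstar, ENat.measureOfMasses_apply_top]
  · exact ((ae_iff_measure_eq (Set.to_countable _).measurableSet.nullMeasurableSet).1
      (ae_fst_le_snd_monotoneCoupling _)).trans measure_univ
end
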